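/- arXiv:1909.02227 — 3 statements merged into one kernel-verified Lean document; each statement's English description precedes it below -/
import Mathlib

section
/- Spectral formula for the Lyapunov energy of a state variable: if A is Hurwitz, x₀ ∈ ℂⁿ, z := V x₀, and k ∈ {1,…,n}, then ∫₀^∞ |(exp(At) x₀)_k|² dt = −∑_{i,j=1}^n conj(u_i^k z_i) · u_j^k z_j / (conj(λ_i) + λ_j), where (exp(At)x₀)_k denotes the k-th component; in particular the right-hand side is a nonnegative real number. -/
/-!
Diagonalising `A`, the `k`-th component of `exp(At) x₀` is `∑ᵢ u_i^k zᵢ e^{λᵢ t}`. Its squared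
modulus is the double sum of `conj(u_i^k zᵢ) u_j^k z_j e^{(conj λᵢ + λ_j) t}`, and since
`Re (conj λᵢ + λ_j) < 0` each term is integrable on `(0, ∞)` with integral
`-conj(u_i^k zᵢ) u_j^k z_j / (conj λᵢ + λ_j)`. Reality and nonnegativity of the sum are then
inherited from the left-hand side.
-/

open Matrix MeasureTheory BigOperators
open scoped ComplexConjugate

theorem exp_smul_conj_diagonal {m : Type*} [Fintype m] [DecidableEq m]
    {U V : Matrix m m ℂ} (hUV : U * V = 1) (hVU : V * U = 1) (lam : m → ℂ) (t : ℂ) :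
    NormedSpace.exp (t • (U * diagonal lam * V)) =
      U * diagonal (fun i => Complex.exp (t * lam i)) * V := by
  let u : (Matrix m m ℂ)ˣ := ⟨U, V, hUV, hVU⟩
  have hconj : t • (U * diagonal lam * V) =
      (u : Matrix m m ℂ) * diagonal (t • lam) * (↑u⁻¹ : Matrix m m ℂ) := by
    rw [diagonal_smul, Matrix.mul_smul, Matrix.smul_mul]; rfl
  rw [hconj, Matrix.exp_units_conj, Matrix.exp_diagonal, Pi.exp_def, Complex.exp_eq_exp_ℂ]
  rfl

theorem exp_smul_conj_diagonal_mulVec_apply {m : Type*} [Fintype m] [DecidableEq m]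
    {U V : Matrix m m ℂ} (hUV : U * V = 1) (hVU : V * U = 1) (lam : m → ℂ) (t : ℂ)
    (x : m → ℂ) (k : m) :
    (NormedSpace.exp (t • (U * diagonal lam * V)) *ᵥ x) k =
      ∑ i, U k i * (V *ᵥ x) i * Complex.exp (lam i * t) := by
  rw [exp_smul_conj_diagonal hUV hVU, ← mulVec_mulVec, ← mulVec_mulVec, mulVec,
    dotProduct]
  simp only [mulVec_diagonal, mul_comm t, mul_assoc, mul_comm (Complex.exp _)]

theorem ofReal_norm_sq_sum_mul_exp {ι : Type*} [Fintype ι] (c μ : ι → ℂ) (t : ℝ) :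
    ((‖∑ i, c i * Complex.exp (μ i * t)‖ ^ 2 : ℝ) : ℂ) =
      ∑ i, ∑ j, conj (c i) * c j * Complex.exp ((conj (μ i) + μ j) * t) := by
  rw [← Complex.normSq_eq_norm_sq, Complex.normSq_eq_conj_mul_self, map_sum,
    Finset.sum_mul_sum]
  refine Finset.sum_congr rfl fun i _ => Finset.sum_congr rfl fun j _ => ?_
  rw [map_mul, ← Complex.exp_conj, map_mul, Complex.conj_ofReal, add_mul, Complex.exp_add]
  ring

theorem integral_norm_sq_sum_mul_exp_Ioi {ι : Type*} [Fintype ι] (c : ι → ℂ) {μ : ι → ℂ}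
    (hμ : ∀ i, (μ i).re < 0) :
    ((∫ t in Set.Ioi (0 : ℝ), ‖∑ i, c i * Complex.exp (μ i * t)‖ ^ 2 : ℝ) : ℂ) =
      -∑ i, ∑ j, conj (c i) * c j / (conj (μ i) + μ j) := by
  have hμμ : ∀ i j, (conj (μ i) + μ j).re < 0 := fun i j => by
    simpa only [Complex.add_re, Complex.conj_re] using add_neg (hμ i) (hμ j)
  have hint : ∀ i j, IntegrableOn
      (fun t : ℝ => conj (c i) * c j * Complex.exp ((conj (μ i) + μ j) * t)) (Set.Ioi 0) :=
    fun i j => (integrableOn_exp_mul_complex_Ioi (hμμ i j) 0).const_mul _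
  rw [← integral_complex_ofReal]
  simp_rw [ofReal_norm_sq_sum_mul_exp]
  rw [integral_finsetSum _ fun i _ => integrable_finsetSum _ fun j _ => hint i j]
  simp_rw [integral_finsetSum _ fun j _ => hint _ j, integral_const_mul,
    integral_exp_mul_complex_Ioi (hμμ _ _), Complex.ofReal_zero, mul_zero, Complex.exp_zero,
    neg_div, mul_neg, mul_one_div, Finset.sum_neg_distrib]

theorem lyapunov_energy_of_state_spectral_formula_general
    (n : ℕ)
    (A U V : Matrix (Fin n) (Fin n) ℂ) (lam : Fin n → ℂ)
    (hUV : U * V = 1) (hVU : V * U = 1)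
    (hA : A = U * Matrix.diagonal lam * V)
    (hHur : ∀ i, (lam i).re < 0)
    (x₀ : Fin n → ℂ) (z : Fin n → ℂ) (hz : z = V.mulVec x₀) (k : Fin n) :
    ((∫ t in Set.Ioi (0 : ℝ),
        ‖(NormedSpace.exp ((t : ℂ) • A)).mulVec x₀ k‖ ^ 2 : ℝ) : ℂ) =
      -(∑ i, ∑ j,
          starRingEnd ℂ (U k i * z i) * (U k j * z j) / (starRingEnd ℂ (lam i) + lam j)) ∧
    (-(∑ i, ∑ j,
          starRingEnd ℂ (U k i * z i) * (U k j * z j) /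
            (starRingEnd ℂ (lam i) + lam j))).im = 0 ∧
    0 ≤ (-(∑ i, ∑ j,
          starRingEnd ℂ (U k i * z i) * (U k j * z j) /
            (starRingEnd ℂ (lam i) + lam j))).re := by
  subst hA hz
  have henergy : ((∫ t in Set.Ioi (0 : ℝ),
      ‖(NormedSpace.exp ((t : ℂ) • (U * diagonal lam * V))).mulVec x₀ k‖ ^ 2 : ℝ) : ℂ) =
        -∑ i, ∑ j, conj (U k i * (V *ᵥ x₀) i) * (U k j * (V *ᵥ x₀) j) /
          (conj (lam i) + lam j) := by
    simp_rw [exp_smul_conj_diagonal_mulVec_apply hUV hVU]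
    exact integral_norm_sq_sum_mul_exp_Ioi _ hHur
  refine ⟨henergy, ?_, ?_⟩ <;> rw [← henergy]
  · exact Complex.ofReal_im _
  · exact integral_nonneg fun t => sq_nonneg _

/-- Spectral formula for the Lyapunov energy of a state variable: if `A` is Hurwitz,
`x₀ ∈ ℂⁿ`, `z := V x₀`, and `k` is a state index, then
`∫₀^∞ |(exp(At) x₀)_k|² dt = −∑_{i,j} conj(u_i^k z_i) u_j^k z_j / (conj(λ_i) + λ_j)`;
in particular the right-hand side is a nonnegative real number. -/
theorem lyapunov_energy_of_state_spectral_formula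
    (n : ℕ) (hn : 1 ≤ n)
    (A U V : Matrix (Fin n) (Fin n) ℂ) (lam : Fin n → ℂ)
    (hUV : U * V = 1) (hVU : V * U = 1)
    (hA : A = U * Matrix.diagonal lam * V)
    (hHur : ∀ i, (lam i).re < 0)
    (x₀ : Fin n → ℂ) (z : Fin n → ℂ) (hz : z = V.mulVec x₀) (k : Fin n) :
    ((∫ t in Set.Ioi (0 : ℝ),
        ‖(NormedSpace.exp ((t : ℂ) • A)).mulVec x₀ k‖ ^ 2 : ℝ) : ℂ) =
      -(∑ i, ∑ j,
          starRingEnd ℂ (U k i * z i) * (U k j * z j) / (starRingEnd ℂ (lam i) + lam j)) ∧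
    (-(∑ i, ∑ j,
          starRingEnd ℂ (U k i * z i) * (U k j * z j) /
            (starRingEnd ℂ (lam i) + lam j))).im = 0 ∧
    0 ≤ (-(∑ i, ∑ j,
          starRingEnd ℂ (U k i * z i) * (U k j * z j) /
            (starRingEnd ℂ (lam i) + lam j))).re :=
  lyapunov_energy_of_state_spectral_formula_general n A U V lam hUV hVU hA hHur x₀ z hz k
end

section
/- Structure of the modal decomposition of the state-energy Gramian: suppose A is Hurwitz and let P_x := −∑_{i,j=1}^n R_iᴴ R_j/(conj(λ_i) + λ_j) (the solution of Aᴴ P_x + P_x A = −I), and set P̄_z := Uᴴ P_x U. Then: (a) Λᴴ P̄_z + P̄_z Λ = −Uᴴ U; (b) for each i, the matrix P̄_{z i} := −{ ∑_{j=1}^n ((u_iᴴ u_j)/(conj(λ_i) + λ_j)) e_i e_jᵀ }_H satisfies P̄_{z i} = ½( P̄_z e_i e_iᵀ + e_i e_iᵀ P̄_z ); (c) ∑_{i=1}^n P̄_{z i} = P̄_z. -/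
open Matrix BigOperators

/-- The residue matrix `R_i = u_i v_iᵀ`, with entries `(R_i)_{kl} = U_{ki} V_{il}`. -/
noncomputable def residue {n : ℕ} (U V : Matrix (Fin n) (Fin n) ℂ) (i : Fin n) :
    Matrix (Fin n) (Fin n) ℂ :=
  Matrix.vecMulVec (fun k => U k i) (fun l => V i l)

/-- The Hermitian part `{M}_H = ½(M + Mᴴ)` of a square complex matrix. -/
noncomputable def hermPart {n : ℕ} (M : Matrix (Fin n) (Fin n) ℂ) :
    Matrix (Fin n) (Fin n) ℂ :=
  (1 / 2 : ℂ) • (M + Mᴴ)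

/-- The modal-contribution matrix
`P̄_{z i} := −{ ∑_j ((u_iᴴ u_j)/(conj(λ_i) + λ_j)) e_i e_jᵀ }_H`. -/
noncomputable def modalContrib {n : ℕ} (U : Matrix (Fin n) (Fin n) ℂ) (lam : Fin n → ℂ)
    (i : Fin n) : Matrix (Fin n) (Fin n) ℂ :=
  -hermPart (∑ j, Matrix.single i j
    ((∑ k, starRingEnd ℂ (U k i) * U k j) / (starRingEnd ℂ (lam i) + lam j)))

/-! Since `V U = 1`, `R_j U = U e_j e_jᵀ`, so `Uᴴ R_iᴴ R_j U = (Uᴴ U)_{ij} e_i e_jᵀ` and `P̄_z` is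
the entrywise solution `-(Uᴴ U)_{ab} / (conj λ_a + λ_b)` of the diagonal Lyapunov equation (a),
defined because `A` is Hurwitz. It is Hermitian since `Uᴴ U` is; conjugating (a) by `V` gives
`Aᴴ P_x + P_x A = -I`. The sum inside `P̄_{z i}` is `-e_i e_iᵀ P̄_z`, which gives (b), and (c)
follows from `∑_i e_i e_iᵀ = I`. -/

namespace Matrix

variable {ι : Type*}

theorem sum_single_apply_row_eq_single_mul [Fintype ι] [DecidableEq ι] {R : Type*} [Semiring R]
    (M : Matrix ι ι R) (i : ι) :
    ∑ j, single i j (M i j) = single i i 1 * M := by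
  ext a b
  by_cases h : a = i
  · subst h
    simp [sum_apply, single_apply]
  · simp [sum_apply, Ne.symm h, h]

theorem sum_half_smul_mul_single_add_single_mul [Fintype ι] [DecidableEq ι] {K : Type*}
    [DivisionRing K] [CharZero K] (P : Matrix ι ι K) :
    ∑ i, (1 / 2 : K) • (P * single i i 1 + single i i 1 * P) = P := by
  rw [← Finset.smul_sum, Finset.sum_add_distrib, ← Matrix.mul_sum, ← Matrix.sum_mul,
    sum_single_one, Matrix.mul_one, Matrix.one_mul, ← two_smul K P, smul_smul]
  norm_num

theorem conjTranspose_mul_add_mul_of_mul_eq_one [Fintype ι] [DecidableEq ι] {R : Type*}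
    [Semiring R] [StarRing R]
    {U V : Matrix ι ι R} (hVU : V * U = 1) (D Q : Matrix ι ι R) :
    (U * D * V)ᴴ * (Vᴴ * Q * V) + Vᴴ * Q * V * (U * D * V) = Vᴴ * (Dᴴ * Q + Q * D) * V := by
  have hVU_star : Uᴴ * Vᴴ = 1 := by rw [← conjTranspose_mul, hVU, conjTranspose_one]
  simp only [conjTranspose_mul, Matrix.mul_add, Matrix.add_mul, ← Matrix.mul_assoc]
  rw [Matrix.mul_assoc _ Uᴴ Vᴴ, hVU_star, Matrix.mul_one, Matrix.mul_assoc (Vᴴ * Q) V U, hVU,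
    Matrix.mul_one]

section DiagonalLyapunov

variable {K : Type*} [Field K] [StarRing K]

def diagLyapunovSol (lam : ι → K) (S : Matrix ι ι K) : Matrix ι ι K :=
  of fun a b => -(S a b / (star (lam a) + lam b))

theorem diagonal_conjTranspose_mul_diagLyapunovSol_add [Fintype ι] [DecidableEq ι] {lam : ι → K}
    (hlam : ∀ a b, star (lam a) + lam b ≠ 0) (S : Matrix ι ι K) :
    (diagonal lam)ᴴ * diagLyapunovSol lam S + diagLyapunovSol lam S * diagonal lam = -S := by
  ext a b
  simp only [diagonal_conjTranspose, add_apply, diagonal_mul, mul_diagonal, neg_apply,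
    diagLyapunovSol, of_apply, Pi.star_apply]
  field_simp [hlam a b]
  ring

theorem IsHermitian.diagLyapunovSol {S : Matrix ι ι K} (hS : S.IsHermitian) (lam : ι → K) :
    (diagLyapunovSol lam S).IsHermitian :=
  IsHermitian.ext fun a b => by
    simp only [Matrix.diagLyapunovSol, of_apply, star_neg, star_div₀, star_add, star_star,
      hS.apply]
    rw [add_comm]

end DiagonalLyapunov

end Matrix

theorem star_add_ne_zero_of_re_neg {z w : ℂ} (hz : z.re < 0) (hw : w.re < 0) :
    star z + w ≠ 0 := fun h => by
  have := congrArg Complex.re h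
  simp only [Complex.add_re, Complex.star_def, Complex.conj_re, Complex.zero_re] at this
  linarith

section Residue

variable {n : ℕ} {U V : Matrix (Fin n) (Fin n) ℂ}

theorem residue_eq_mul_single_mul (i : Fin n) :
    residue U V i = U * single i i 1 * V := by
  ext a b
  simp [residue, vecMulVec_apply, mul_apply, single, ite_and]

theorem residue_mul_of_mul_eq_one (hVU : V * U = 1) (i : Fin n) :
    residue U V i * U = U * single i i 1 := by
  rw [residue_eq_mul_single_mul, Matrix.mul_assoc, hVU, Matrix.mul_one]

theorem conjTranspose_mul_residue_conjTranspose_mul_residue_mul (hVU : V * U = 1) (i j : Fin n) :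
    Uᴴ * ((residue U V i)ᴴ * residue U V j) * U = single i j ((Uᴴ * U) i j) := by
  have h : Uᴴ * ((residue U V i)ᴴ * residue U V j) * U =
      (residue U V i * U)ᴴ * (residue U V j * U) := by
    simp only [conjTranspose_mul, Matrix.mul_assoc]
  rw [h, residue_mul_of_mul_eq_one hVU, residue_mul_of_mul_eq_one hVU, conjTranspose_mul,
    conjTranspose_single, star_one, ← Matrix.mul_assoc, Matrix.mul_assoc (single i i 1) Uᴴ U,
    single_mul_mul_single, one_mul, mul_one]

theorem conjTranspose_mul_neg_sum_residue_mul (hVU : V * U = 1) (lam : Fin n → ℂ) :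
    Uᴴ * (-∑ i, ∑ j, (starRingEnd ℂ (lam i) + lam j)⁻¹ •
        ((residue U V i)ᴴ * residue U V j)) * U = diagLyapunovSol lam (Uᴴ * U) := by
  simp only [Matrix.mul_neg, Matrix.neg_mul, Matrix.mul_sum, Matrix.sum_mul, Matrix.mul_smul,
    Matrix.smul_mul, conjTranspose_mul_residue_conjTranspose_mul_residue_mul hVU, smul_single,
    sum_sum_single]
  ext a b
  simp [diagLyapunovSol, div_eq_inv_mul]

end Residue

theorem modalContrib_eq_hermPart {n : ℕ} (U : Matrix (Fin n) (Fin n) ℂ) (lam : Fin n → ℂ)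
    (i : Fin n) :
    modalContrib U lam i = hermPart (single i i 1 * diagLyapunovSol lam (Uᴴ * U)) := by
  have hentry (j : Fin n) : (∑ k, starRingEnd ℂ (U k i) * U k j) / (starRingEnd ℂ (lam i) + lam j)
      = -diagLyapunovSol lam (Uᴴ * U) i j := by
    simp [diagLyapunovSol, mul_apply]
  simp only [modalContrib, hentry, ← single_neg, Finset.sum_neg_distrib,
    sum_single_apply_row_eq_single_mul, hermPart, conjTranspose_neg, ← neg_add, smul_neg, neg_neg]

theorem hermPart_single_mul_of_isHermitian {n : ℕ} {P : Matrix (Fin n) (Fin n) ℂ}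
    (hP : P.IsHermitian) (i : Fin n) :
    hermPart (single i i 1 * P) = (1 / 2 : ℂ) • (P * single i i 1 + single i i 1 * P) := by
  rw [hermPart, conjTranspose_mul, hP.eq, conjTranspose_single, star_one, add_comm]

theorem modal_decomposition_state_energy_gramian_general
    (n : ℕ)
    (A U V : Matrix (Fin n) (Fin n) ℂ) (lam : Fin n → ℂ)
    (hUV : U * V = 1) (hVU : V * U = 1)
    (hA : A = U * Matrix.diagonal lam * V)
    (hHur : ∀ i, (lam i).re < 0)
    (Px Pz : Matrix (Fin n) (Fin n) ℂ)
    (hPx : Px = -∑ i, ∑ j, (starRingEnd ℂ (lam i) + lam j)⁻¹ •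
        ((residue U V i)ᴴ * residue U V j))
    (hPz : Pz = Uᴴ * Px * U) :
    (Aᴴ * Px + Px * A = -1) ∧
    ((Matrix.diagonal lam)ᴴ * Pz + Pz * Matrix.diagonal lam = -(Uᴴ * U)) ∧
    (∀ i, modalContrib U lam i =
        (1 / 2 : ℂ) • (Pz * Matrix.single i i (1 : ℂ) +
          Matrix.single i i (1 : ℂ) * Pz)) ∧
    (∑ i, modalContrib U lam i = Pz) := by
  have hPzSol : Pz = diagLyapunovSol lam (Uᴴ * U) := by
    rw [hPz, hPx, conjTranspose_mul_neg_sum_residue_mul hVU]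
  have hLyap : (diagonal lam)ᴴ * Pz + Pz * diagonal lam = -(Uᴴ * U) := by
    rw [hPzSol]
    exact diagonal_conjTranspose_mul_diagLyapunovSol_add
      (fun a b => star_add_ne_zero_of_re_neg (hHur a) (hHur b)) _
  have hHerm : Pz.IsHermitian := hPzSol ▸ (isHermitian_conjTranspose_mul_self U).diagLyapunovSol lam
  have hContrib (i : Fin n) : modalContrib U lam i =
      (1 / 2 : ℂ) • (Pz * single i i 1 + single i i 1 * Pz) := by
    rw [modalContrib_eq_hermPart, ← hPzSol, hermPart_single_mul_of_isHermitian hHerm]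
  have hPxPz : Px = Vᴴ * Pz * V := by
    calc Px = (U * V)ᴴ * Px * (U * V) := by
          rw [hUV, conjTranspose_one, Matrix.one_mul, Matrix.mul_one]
      _ = Vᴴ * Pz * V := by simp only [hPz, conjTranspose_mul, Matrix.mul_assoc]
  refine ⟨?_, hLyap, hContrib, ?_⟩
  · rw [hA, hPxPz, conjTranspose_mul_add_mul_of_mul_eq_one hVU, hLyap, Matrix.mul_neg,
      Matrix.neg_mul, ← Matrix.mul_assoc, ← conjTranspose_mul, Matrix.mul_assoc, hUV,
      conjTranspose_one, Matrix.one_mul]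
  · rw [Finset.sum_congr rfl fun i _ => hContrib i, sum_half_smul_mul_single_add_single_mul]

/-- Structure of the modal decomposition of the state-energy Gramian: with
`P_x := −∑_{i,j} R_iᴴ R_j/(conj(λ_i)+λ_j)` (the solution of `Aᴴ P_x + P_x A = −I`) and
`P̄_z := Uᴴ P_x U`, one has (a) `Λᴴ P̄_z + P̄_z Λ = −Uᴴ U`;
(b) `P̄_{z i} = ½(P̄_z e_i e_iᵀ + e_i e_iᵀ P̄_z)` for every `i`; (c) `∑_i P̄_{z i} = P̄_z`. -/
theorem modal_decomposition_state_energy_gramian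
    (n : ℕ) (hn : 1 ≤ n)
    (A U V : Matrix (Fin n) (Fin n) ℂ) (lam : Fin n → ℂ)
    (hUV : U * V = 1) (hVU : V * U = 1)
    (hA : A = U * Matrix.diagonal lam * V)
    (hHur : ∀ i, (lam i).re < 0)
    (Px Pz : Matrix (Fin n) (Fin n) ℂ)
    (hPx : Px = -∑ i, ∑ j, (starRingEnd ℂ (lam i) + lam j)⁻¹ •
        ((residue U V i)ᴴ * residue U V j))
    (hPz : Pz = Uᴴ * Px * U) :
    (Aᴴ * Px + Px * A = -1) ∧
    ((Matrix.diagonal lam)ᴴ * Pz + Pz * Matrix.diagonal lam = -(Uᴴ * U)) ∧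
    (∀ i, modalContrib U lam i =
        (1 / 2 : ℂ) • (Pz * Matrix.single i i (1 : ℂ) +
          Matrix.single i i (1 : ℂ) * Pz)) ∧
    (∑ i, modalContrib U lam i = Pz) :=
  modal_decomposition_state_energy_gramian_general n A U V lam hUV hVU hA hHur Px Pz hPx hPz
end

section
/- A modal contribution equals the sum of its contributions to all states: if A is Hurwitz, then for each i, Vᴴ P̄_{z i} V = ∑_{k=1}^n P̃_{x_k i}, where P̄_{z i} := −{ ∑_{j=1}^n ((u_iᴴ u_j)/(conj(λ_i) + λ_j)) e_i e_jᵀ }_H and P̃_{x_k i} := −{ conj(v_i) · conj(u_i^k) · e_kᵀ (conj(λ_i)I + A)⁻¹ }_H, with conj(v_i) the column vector whose entries are the complex conjugates of the entries of v_i and u_i^k the k-th component of u_i. -/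
/-!
Because `A` is Hurwitz, `conj(λ_i) + λ_j ≠ 0` for all `j`, so the diagonalization of `A` also
diagonalizes the resolvent: `(conj(λ_i) I + A)⁻¹ = U diag(1 / (conj(λ_i) + λ_j)) V`. Congruence by
`V` commutes with Hermitian parts and finite sums, and `Vᴴ e_i = conj(v_i)`, so the left-hand side
is `−{conj(v_i) u_iᴴ (conj(λ_i) I + A)⁻¹}_H`. Expanding `u_iᴴ = ∑_k conj(u_i^k) e_kᵀ` splits this
into the state contributions.
-/

open Matrix BigOperators

/-- The sub-Gramian of the `k`-th state associated with the `i`-th mode,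
`P̃_{x_k i} := −{ conj(v_i) conj(u_i^k) e_kᵀ (conj(λ_i)I + A)⁻¹ }_H`. -/
noncomputable def stateSubGramian {n : ℕ} (A U V : Matrix (Fin n) (Fin n) ℂ)
    (lam : Fin n → ℂ) (k i : Fin n) : Matrix (Fin n) (Fin n) ℂ :=
  -hermPart
    (Matrix.vecMulVec (fun a => starRingEnd ℂ (V i a))
        (fun b => starRingEnd ℂ (U k i) * (if b = k then 1 else 0)) *
      (starRingEnd ℂ (lam i) • (1 : Matrix (Fin n) (Fin n) ℂ) + A)⁻¹)

namespace Matrix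

variable {n R K : Type*} [Fintype n] [DecidableEq n]

section Semiring

variable [Semiring R]

theorem sum_single_eq_vecMulVec (i : n) (c : n → R) :
    ∑ j, single i j (c j) = vecMulVec (Pi.single i 1) c := by
  ext a b
  simp [Matrix.sum_apply, single_apply, vecMulVec_apply, Pi.single_apply, ite_and, eq_comm]

theorem sum_vecMulVec_single (x y : n → R) :
    ∑ k, vecMulVec x (Pi.single k (y k)) = vecMulVec x y := by
  ext a b
  simp [Matrix.sum_apply, vecMulVec_apply, Pi.single_apply]

theorem conjTranspose_mul_sum_single_mul [StarRing R] (V : Matrix n n R) (i : n) (c : n → R) :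
    Vᴴ * (∑ j, single i j (c j)) * V = vecMulVec (star (V i)) (c ᵥ* V) := by
  rw [sum_single_eq_vecMulVec, mul_vecMulVec, vecMulVec_mul, mulVec_single_one]
  rfl

end Semiring

theorem smul_one_add_mul_diagonal_mul [CommSemiring R] {U V : Matrix n n R} (hUV : U * V = 1)
    (μ : R) (lam : n → R) :
    μ • (1 : Matrix n n R) + U * diagonal lam * V = U * diagonal (fun j => μ + lam j) * V := by
  rw [← diagonal_add, ← smul_one_eq_diagonal, Matrix.mul_add, Matrix.add_mul, Matrix.mul_smul,
    Matrix.smul_mul, Matrix.mul_one, hUV]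

theorem inv_mul_diagonal_mul [Field K] {U V : Matrix n n K} (hUV : U * V = 1) (hVU : V * U = 1)
    {d : n → K} (hd : ∀ j, d j ≠ 0) :
    (U * diagonal d * V)⁻¹ = U * diagonal (fun j => (d j)⁻¹) * V := by
  refine inv_eq_left_inv ?_
  calc U * diagonal (fun j => (d j)⁻¹) * V * (U * diagonal d * V)
      = U * (diagonal (fun j => (d j)⁻¹) * (V * U) * diagonal d) * V := by
        simp only [Matrix.mul_assoc]
    _ = 1 := by
        simp [hVU, diagonal_mul_diagonal, inv_mul_cancel₀ (hd _), hUV]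

end Matrix

theorem Complex.conj_add_ne_zero_of_re_neg {a b : ℂ} (ha : a.re < 0) (hb : b.re < 0) :
    starRingEnd ℂ a + b ≠ 0 := fun h => by
  have := congrArg Complex.re h
  simp only [Complex.add_re, Complex.conj_re, Complex.zero_re] at this
  linarith

theorem hermPart_conjTranspose_mul_mul {n : ℕ} (M V : Matrix (Fin n) (Fin n) ℂ) :
    Vᴴ * hermPart M * V = hermPart (Vᴴ * M * V) := by
  simp only [hermPart, Matrix.mul_add, Matrix.add_mul, Matrix.mul_smul, Matrix.smul_mul,
    conjTranspose_mul, conjTranspose_conjTranspose, Matrix.mul_assoc]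

theorem hermPart_sum {n : ℕ} {ι : Type*} [Fintype ι] (M : ι → Matrix (Fin n) (Fin n) ℂ) :
    hermPart (∑ k, M k) = ∑ k, hermPart (M k) := by
  simp only [hermPart, conjTranspose_sum, ← Finset.sum_add_distrib, Finset.smul_sum]

theorem modal_contribution_eq_sum_of_state_contributions_general
    (n : ℕ)
    (A U V : Matrix (Fin n) (Fin n) ℂ) (lam : Fin n → ℂ)
    (hUV : U * V = 1) (hVU : V * U = 1)
    (hA : A = U * Matrix.diagonal lam * V)
    (hHur : ∀ i, (lam i).re < 0)
    (i : Fin n) :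
    Vᴴ * modalContrib U lam i * V = ∑ k, stateSubGramian A U V lam k i := by
  have hresolvent : (starRingEnd ℂ (lam i) • 1 + A)⁻¹
      = U * diagonal (fun j => (starRingEnd ℂ (lam i) + lam j)⁻¹) * V := by
    rw [hA, smul_one_add_mul_diagonal_mul hUV, inv_mul_diagonal_mul hUV hVU
      fun j => Complex.conj_add_ne_zero_of_re_neg (hHur i) (hHur j)]
  have hcoeff : (fun j => (∑ k, starRingEnd ℂ (U k i) * U k j) / (starRingEnd ℂ (lam i) + lam j))
      = star (Uᵀ i) ᵥ* (U * diagonal (fun j => (starRingEnd ℂ (lam i) + lam j)⁻¹)) := by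
    funext j
    simp [vecMul, dotProduct, div_eq_mul_inv, Finset.sum_mul, mul_assoc]
  have hstate : ∀ k, vecMulVec (fun a => starRingEnd ℂ (V i a))
      (fun b => starRingEnd ℂ (U k i) * if b = k then 1 else 0)
      = vecMulVec (star (V i)) (Pi.single k (star (Uᵀ i) k)) := fun k => by
    congr 1
    funext b
    simp [Pi.single_apply]
  simp only [modalContrib, stateSubGramian, Matrix.mul_neg, Matrix.neg_mul,
    Finset.sum_neg_distrib, ← hermPart_sum, hermPart_conjTranspose_mul_mul, hstate]
  rw [← Finset.sum_mul, sum_vecMulVec_single, conjTranspose_mul_sum_single_mul, hcoeff,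
    vecMul_vecMul, vecMulVec_mul, hresolvent]

/-- A modal contribution equals the sum of its contributions to all states: if `A` is
Hurwitz, then for each `i`, `Vᴴ P̄_{z i} V = ∑_k P̃_{x_k i}`. -/
theorem modal_contribution_eq_sum_of_state_contributions
    (n : ℕ) (hn : 1 ≤ n)
    (A U V : Matrix (Fin n) (Fin n) ℂ) (lam : Fin n → ℂ)
    (hUV : U * V = 1) (hVU : V * U = 1)
    (hA : A = U * Matrix.diagonal lam * V)
    (hHur : ∀ i, (lam i).re < 0)
    (i : Fin n) :
    Vᴴ * modalContrib U lam i * V = ∑ k, stateSubGramian A U V lam k i :=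
  modal_contribution_eq_sum_of_state_contributions_general n A U V lam hUV hVU hA hHur i
end
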